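/- Finite Markov chains almost surely enter a bottom strongly connected component: Let (S, P) be a Markov chain on a finite state space S. Then for every state s, the set of states that belong to some bottom strongly connected component (BSCC) is reached almost surely: P_s(Reach(⋃{B : B is a BSCC})) = 1. Consequently, for every T ⊆ S, if P_s(Reach(T)) < 1 then there exists a BSCC B with B ∩ T = ∅ and P_s(Reach(B)) > 0. -/

import Mathlib

/-!
Every state of a finite chain can reach a BSCC: go to a state whose set of successors is minimal.
If a set `U` is reachable from every state, then `f = P_·(Reach U)` satisfies the first-step
equation `f s = ∑ P s s' f s'` off `U`, so a minimiser of `f` outside `U` passes its value on to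
all its successors; along a path from a minimiser into `U` the minimum is carried to a state where
`f = 1`. Taking for `U` the union of all BSCCs gives the first claim. For the second take
`U = T ∪ V`, with `V` the union of the BSCCs disjoint from `T` (a BSCC meeting `T` leads into `T`):
then `1 ≤ P_s(Reach T) + P_s(Reach V)`, so some state of `V` is reachable from `s`.
-/

open scoped Classical

structure MC (S : Type) where
  P : S → S → ℝ
  nonneg : ∀ s s', 0 ≤ P s s'
  sum_one : ∀ s, HasSum (P s) 1

noncomputable def MC.reachAux {S : Type} (M : MC S) (T : Set S) : ℕ → S → ℝ
  | 0, s => if s ∈ T then 1 else 0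
  | k + 1, s => if s ∈ T then 1 else ∑' s', M.P s s' * M.reachAux T k s'

noncomputable def MC.PReach {S : Type} (M : MC S) (T : Set S) (s : S) : ℝ :=
  ⨆ k : ℕ, M.reachAux T k s

def MC.IsBSCC {S : Type} (M : MC S) (B : Set S) : Prop :=
  B.Nonempty ∧ (∀ b ∈ B, ∀ s', 0 < M.P b s' → s' ∈ B) ∧
    ∀ b ∈ B, ∀ b' ∈ B, Relation.ReflTransGen (fun u u' => 0 < M.P u u') b b'

theorem Relation.exists_reflTransGen_forall_reflTransGen_symm {α : Type*} [Finite α]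
    (r : α → α → Prop) (a : α) :
    ∃ b, ReflTransGen r a b ∧ ∀ c, ReflTransGen r b c → ReflTransGen r c b := by
  obtain ⟨b, hab, hmin⟩ := Set.toFinite {b | ReflTransGen r a b}
    |>.exists_minimalFor (fun b => {c | ReflTransGen r b c}) _ ⟨a, .refl⟩
  exact ⟨b, hab, fun c hbc =>
    hmin (hab.trans hbc) (fun d hcd => hbc.trans hcd) (ReflTransGen.refl : ReflTransGen r b b)⟩

namespace MC

variable {S : Type} (M : MC S)

abbrev Reachable : S → S → Prop := Relation.ReflTransGen fun u u' => 0 < M.P u u'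

theorem isBSCC_setOf_reachable {t : S} (ht : ∀ u, M.Reachable t u → M.Reachable u t) :
    M.IsBSCC {u | M.Reachable t u} :=
  ⟨⟨t, .refl⟩, fun _ hb _ hstep => hb.tail hstep, fun _ hb _ hb' => (ht _ hb).trans hb'⟩

theorem exists_isBSCC_reachable [Finite S] (s : S) :
    ∃ B, M.IsBSCC B ∧ ∃ t ∈ B, M.Reachable s t := by
  obtain ⟨t, hst, hbottom⟩ := Relation.exists_reflTransGen_forall_reflTransGen_symm _ s
  exact ⟨_, M.isBSCC_setOf_reachable hbottom, t, .refl, hst⟩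

theorem reachAux_of_mem {T : Set S} {s : S} (hs : s ∈ T) (k : ℕ) : M.reachAux T k s = 1 := by
  cases k <;> simp [reachAux, hs]

theorem reachAux_zero_of_not_mem {T : Set S} {s : S} (hs : s ∉ T) : M.reachAux T 0 s = 0 := by
  simp [reachAux, hs]

variable [Fintype S]

theorem sum_P (s : S) : ∑ s', M.P s s' = 1 := by
  rw [← (M.sum_one s).tsum_eq, tsum_fintype]

theorem reachAux_succ_of_not_mem {T : Set S} {s : S} (hs : s ∉ T) (k : ℕ) :
    M.reachAux T (k + 1) s = ∑ s', M.P s s' * M.reachAux T k s' := by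
  simp [reachAux, hs, tsum_fintype]

theorem reachAux_nonneg (T : Set S) : ∀ k s, 0 ≤ M.reachAux T k s
  | 0, s => by unfold reachAux; split_ifs <;> norm_num
  | k + 1, s => by
    by_cases hs : s ∈ T
    · simp [M.reachAux_of_mem hs]
    · rw [M.reachAux_succ_of_not_mem hs]
      exact Finset.sum_nonneg fun s' _ => mul_nonneg (M.nonneg s s') (reachAux_nonneg T k s')

theorem sum_P_mul_le_one {f : S → ℝ} (hf : ∀ s, f s ≤ 1) (s : S) :
    ∑ s', M.P s s' * f s' ≤ 1 :=
  calc ∑ s', M.P s s' * f s' ≤ ∑ s', M.P s s' :=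
        Finset.sum_le_sum fun s' _ => mul_le_of_le_one_right (M.nonneg s s') (hf s')
    _ = 1 := M.sum_P s

theorem reachAux_le_one (T : Set S) : ∀ k s, M.reachAux T k s ≤ 1
  | 0, s => by unfold reachAux; split_ifs <;> norm_num
  | k + 1, s => by
    by_cases hs : s ∈ T
    · simp [M.reachAux_of_mem hs]
    · rw [M.reachAux_succ_of_not_mem hs]
      exact M.sum_P_mul_le_one (reachAux_le_one T k) s

theorem reachAux_le_succ (T : Set S) : ∀ k s, M.reachAux T k s ≤ M.reachAux T (k + 1) s
  | 0, s => by
    by_cases hs : s ∈ T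
    · simp [M.reachAux_of_mem hs]
    · rw [M.reachAux_zero_of_not_mem hs]
      exact M.reachAux_nonneg T 1 s
  | k + 1, s => by
    by_cases hs : s ∈ T
    · simp [M.reachAux_of_mem hs]
    · rw [M.reachAux_succ_of_not_mem hs, M.reachAux_succ_of_not_mem hs]
      exact Finset.sum_le_sum fun s' _ =>
        mul_le_mul_of_nonneg_left (reachAux_le_succ T k s') (M.nonneg s s')

theorem monotone_reachAux (T : Set S) (s : S) : Monotone fun k => M.reachAux T k s :=
  monotone_nat_of_le_succ fun k => M.reachAux_le_succ T k s

theorem bddAbove_range_reachAux (T : Set S) (s : S) :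
    BddAbove (Set.range fun k => M.reachAux T k s) :=
  ⟨1, Set.forall_mem_range.2 fun k => M.reachAux_le_one T k s⟩

theorem reachAux_le_PReach (T : Set S) (k : ℕ) (s : S) : M.reachAux T k s ≤ M.PReach T s :=
  le_ciSup (M.bddAbove_range_reachAux T s) k

theorem tendsto_reachAux (T : Set S) (s : S) :
    Filter.Tendsto (fun k => M.reachAux T k s) Filter.atTop (nhds (M.PReach T s)) :=
  tendsto_atTop_ciSup (M.monotone_reachAux T s) (M.bddAbove_range_reachAux T s)

theorem PReach_le_one (T : Set S) (s : S) : M.PReach T s ≤ 1 :=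
  ciSup_le fun k => M.reachAux_le_one T k s

theorem PReach_of_mem {T : Set S} {s : S} (hs : s ∈ T) : M.PReach T s = 1 :=
  (M.PReach_le_one T s).antisymm
    ((M.reachAux_of_mem hs 0).symm.trans_le (M.reachAux_le_PReach T 0 s))

theorem PReach_eq_sum_of_not_mem {T : Set S} {s : S} (hs : s ∉ T) :
    M.PReach T s = ∑ s', M.P s s' * M.PReach T s' := by
  have hsucc := (M.tendsto_reachAux T s).comp (Filter.tendsto_add_atTop_nat 1)
  have hsum : Filter.Tendsto (fun k => ∑ s', M.P s s' * M.reachAux T k s') Filter.atTop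
      (nhds (∑ s', M.P s s' * M.PReach T s')) :=
    tendsto_finsetSum _ fun s' _ => (M.tendsto_reachAux T s').const_mul _
  refine tendsto_nhds_unique hsucc (hsum.congr fun k => ?_)
  exact (M.reachAux_succ_of_not_mem hs k).symm

theorem exists_reachable_of_reachAux_pos {T : Set S} :
    ∀ {k s}, 0 < M.reachAux T k s → ∃ t ∈ T, M.Reachable s t
  | 0, s, hpos => by
    by_contra hs
    simp [M.reachAux_zero_of_not_mem fun hs' => hs ⟨s, hs', .refl⟩] at hpos
  | k + 1, s, hpos => by
    by_cases hs : s ∈ T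
    · exact ⟨s, hs, .refl⟩
    rw [M.reachAux_succ_of_not_mem hs] at hpos
    obtain ⟨s', -, hs'⟩ :=
      Finset.exists_lt_of_sum_lt (hpos.trans_eq' Finset.sum_const_zero.symm)
    obtain ⟨t, ht, hreach⟩ :=
      exists_reachable_of_reachAux_pos (pos_of_mul_pos_right hs' (M.nonneg s s'))
    exact ⟨t, ht, .head (pos_of_mul_pos_left hs' (M.reachAux_nonneg T k s')) hreach⟩

theorem exists_reachAux_pos_of_reachable {T : Set S} {s t : S} (hreach : M.Reachable s t)
    (ht : t ∈ T) : ∃ k, 0 < M.reachAux T k s := by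
  induction hreach using Relation.ReflTransGen.head_induction_on with
  | refl => exact ⟨0, by simp [M.reachAux_of_mem ht]⟩
  | @head u v hstep _ ih =>
    obtain ⟨k, hk⟩ := ih
    refine ⟨k + 1, ?_⟩
    by_cases hu : u ∈ T
    · simp [M.reachAux_of_mem hu]
    rw [M.reachAux_succ_of_not_mem hu]
    exact (mul_pos hstep hk).trans_le <| Finset.single_le_sum
      (fun w _ => mul_nonneg (M.nonneg u w) (M.reachAux_nonneg T k w)) (Finset.mem_univ v)

theorem PReach_pos_iff {T : Set S} {s : S} : 0 < M.PReach T s ↔ ∃ t ∈ T, M.Reachable s t := by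
  constructor
  · intro hpos
    obtain ⟨k, hk⟩ := exists_lt_of_lt_ciSup hpos
    exact M.exists_reachable_of_reachAux_pos hk
  · rintro ⟨t, ht, hreach⟩
    obtain ⟨k, hk⟩ := M.exists_reachAux_pos_of_reachable hreach ht
    exact hk.trans_le (M.reachAux_le_PReach T k s)

theorem reachAux_union_le (A B : Set S) :
    ∀ k s, M.reachAux (A ∪ B) k s ≤ M.reachAux A k s + M.reachAux B k s
  | k, s => by
    by_cases hA : s ∈ A
    · rw [M.reachAux_of_mem (Or.inl hA), M.reachAux_of_mem hA]
      linarith [M.reachAux_nonneg B k s]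
    by_cases hB : s ∈ B
    · rw [M.reachAux_of_mem (Or.inr hB), M.reachAux_of_mem hB]
      linarith [M.reachAux_nonneg A k s]
    have hAB : s ∉ A ∪ B := fun h => h.elim hA hB
    cases k with
    | zero => simp [M.reachAux_zero_of_not_mem, hA, hB, hAB]
    | succ k =>
      rw [M.reachAux_succ_of_not_mem hA, M.reachAux_succ_of_not_mem hB,
        M.reachAux_succ_of_not_mem hAB, ← Finset.sum_add_distrib]
      refine Finset.sum_le_sum fun s' _ => ?_
      rw [← mul_add]
      exact mul_le_mul_of_nonneg_left (reachAux_union_le A B k s') (M.nonneg s s')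

theorem PReach_union_le (A B : Set S) (s : S) :
    M.PReach (A ∪ B) s ≤ M.PReach A s + M.PReach B s :=
  ciSup_le fun k => (M.reachAux_union_le A B k s).trans
    (add_le_add (M.reachAux_le_PReach A k s) (M.reachAux_le_PReach B k s))

theorem eq_of_eq_sum_P_mul_of_le {f : S → ℝ} {s s' : S} (hf : f s = ∑ u, M.P s u * f u)
    (hle : ∀ u, 0 < M.P s u → f s ≤ f u) (hstep : 0 < M.P s s') : f s' = f s := by
  have hterm : ∀ u ∈ Finset.univ, 0 ≤ M.P s u * (f u - f s) := fun u _ =>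
    (M.nonneg s u).eq_or_lt.elim (fun h => by simp [← h])
      fun h => mul_nonneg h.le (sub_nonneg.2 (hle u h))
  have hsum : ∑ u, M.P s u * (f u - f s) = 0 := by
    simp only [mul_sub, Finset.sum_sub_distrib, ← Finset.sum_mul, M.sum_P, one_mul, ← hf, sub_self]
  rcases mul_eq_zero.1 ((Finset.sum_eq_zero_iff_of_nonneg hterm).1 hsum s' (Finset.mem_univ _))
    with h | h
  · exact absurd h hstep.ne'
  · linarith

theorem PReach_eq_one_of_isMinOn {T C : Set S} (hC : ∀ c ∈ C, ∀ s', 0 < M.P c s' → s' ∈ C)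
    {m t : S} (hm : IsMinOn (M.PReach T) C m) (hmC : m ∈ C) (hreach : M.Reachable m t)
    (ht : t ∈ T) : M.PReach T m = 1 := by
  induction hreach using Relation.ReflTransGen.head_induction_on with
  | refl => exact M.PReach_of_mem ht
  | @head u v hstep _ ih =>
    by_cases hu : u ∈ T
    · exact M.PReach_of_mem hu
    have hvu : M.PReach T v = M.PReach T u :=
      M.eq_of_eq_sum_P_mul_of_le (M.PReach_eq_sum_of_not_mem hu)
        (fun w hw => hm (hC u hmC w hw)) hstep
    rw [← hvu]
    exact ih (fun x hx => hvu ▸ hm hx) (hC u hmC v hstep)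

theorem PReach_eq_one_of_reachable {T C : Set S} (hC : ∀ c ∈ C, ∀ s', 0 < M.P c s' → s' ∈ C)
    (hreach : ∀ c ∈ C, ∃ t ∈ T, M.Reachable c t) {c : S} (hc : c ∈ C) :
    M.PReach T c = 1 := by
  obtain ⟨m, hmC, hm⟩ := C.exists_min_image (M.PReach T) C.toFinite ⟨c, hc⟩
  obtain ⟨t, ht, hmt⟩ := hreach m hmC
  have hm1 := M.PReach_eq_one_of_isMinOn hC (isMinOn_iff.2 hm) hmC hmt ht
  exact (M.PReach_le_one T c).antisymm (hm1 ▸ hm c hc)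

end MC

/-- **Finite Markov chains almost surely enter a bottom strongly connected component.**
For every state `s` of a finite Markov chain, the union of all BSCCs is reached almost
surely; consequently, if `P_s(Reach T) < 1` for some `T ⊆ S`, then some BSCC `B`
disjoint from `T` is reached with positive probability. -/
theorem bscc_reached_almost_surely {S : Type} [Fintype S] (M : MC S) (s : S) :
    M.PReach {t | ∃ B, M.IsBSCC B ∧ t ∈ B} s = 1 ∧
    ∀ T : Set S, M.PReach T s < 1 →
      ∃ B, M.IsBSCC B ∧ B ∩ T = ∅ ∧ 0 < M.PReach B s := by
  have hclosed : ∀ c ∈ Set.univ, ∀ s', 0 < M.P c s' → s' ∈ Set.univ := fun _ _ _ _ => trivial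
  refine ⟨M.PReach_eq_one_of_reachable hclosed (fun u _ => ?_) (Set.mem_univ s),
    fun T hT => ?_⟩
  · obtain ⟨B, hB, t, htB, hut⟩ := M.exists_isBSCC_reachable u
    exact ⟨t, ⟨B, hB, htB⟩, hut⟩
  set V : Set S := {t | ∃ B, M.IsBSCC B ∧ B ∩ T = ∅ ∧ t ∈ B}
  have hTV : M.PReach (T ∪ V) s = 1 := by
    refine M.PReach_eq_one_of_reachable hclosed (fun u _ => ?_) (Set.mem_univ s)
    obtain ⟨B, hB, t, htB, hut⟩ := M.exists_isBSCC_reachable u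
    by_cases hBT : B ∩ T = ∅
    · exact ⟨t, Or.inr ⟨B, hB, hBT, htB⟩, hut⟩
    · obtain ⟨x, hxB, hxT⟩ := Set.nonempty_iff_ne_empty.2 hBT
      exact ⟨x, Or.inl hxT, hut.trans (hB.2.2 t htB x hxB)⟩
  have hV : 0 < M.PReach V s := by linarith [M.PReach_union_le T V s]
  obtain ⟨t, ⟨B, hB, hBT, htB⟩, hst⟩ := M.PReach_pos_iff.1 hV
  exact ⟨B, hB, hBT, M.PReach_pos_iff.2 ⟨t, htB, hst⟩⟩
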